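/- In the ring Λ of symmetric functions over ℤ (polynomial ring in h_1, h_2, h_3, …, with h_0 = 1 and h_k = 0 for k < 0), define for any n-tuple λ ∈ ℤ^n the generalized Schur function s_λ := det((h_{λ_i - i + j})_{i,j ∈ [n]}). Let λ = (λ_1, …, λ_n) be an integer partition with λ_n = 0, and let p ∈ ℕ. Then s_λ · h_p = Σ_{β ∈ ℕ^n, β_1 + ⋯ + β_n = p} s_{λ+β}, where λ+β is the entrywise sum. -/

import Mathlib

/-!
Put `H_{ij}(t) = ∑_b h_{λ_i - i + j + b} t^b`. Expanding `det H` multilinearly in the rows, the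
coefficient of `t^p` is `∑_{|β| = p} s_{λ+β}`. On the other hand `H_{i,j} - t H_{i,j+1}` is the
constant `h_{λ_i - i + j}`, so column operations turn `H` into the Jacobi–Trudi matrix of `λ` with
only its last column replaced by `H_{i,n}`. Since `λ_n = 0`, the last row of that matrix is
`(0, …, 0, ∑_b h_b t^b)`, whence `det H = s_λ · ∑_b h_b t^b`.
-/

/-- The ring Λ of symmetric functions over ℤ, realized as the polynomial ring
ℤ[h₁, h₂, h₃, …] where the variable indexed by i ∈ ℕ is h_{i+1}. -/
noncomputable abbrev Lambda : Type := MvPolynomial ℕ ℤ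

/-- The complete homogeneous generator h_k ∈ Λ: h_k is the variable X (k-1) for k > 0,
h_0 = 1, and h_k = 0 for k < 0. -/
noncomputable def hh (k : ℤ) : Lambda :=
  if 0 < k then MvPolynomial.X (k.toNat - 1) else if k = 0 then 1 else 0

/-- The generalized Schur function s_λ ∈ Λ for λ ∈ ℤ^n, defined by the
Jacobi–Trudi determinant. -/
noncomputable def schur {n : ℕ} (lam : Fin n → ℤ) : Lambda :=
  Matrix.det (Matrix.of fun i j : Fin n => hh (lam i - ((i : ℕ) : ℤ) + ((j : ℕ) : ℤ)))

namespace Matrix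

variable {R : Type*} [CommRing R] {n : ℕ}

theorem det_eq_of_forall_col_eq_smul_add_succ {A B : Matrix (Fin (n + 1)) (Fin (n + 1)) R}
    (c : Fin n → R) (A_last : ∀ i, A i (Fin.last n) = B i (Fin.last n))
    (A_castSucc : ∀ i (j : Fin n), A i j.castSucc = B i j.castSucc + c j * A i j.succ) :
    det A = det B := by
  rw [← det_submatrix_equiv_self Fin.revPerm A, ← det_submatrix_equiv_self Fin.revPerm B]
  refine det_eq_of_forall_col_eq_smul_add_pred (c ∘ Fin.rev) (fun i => ?_) (fun i j => ?_)
  · simpa using A_last _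
  · simpa [Fin.rev_succ, Fin.rev_castSucc] using A_castSucc (Fin.rev i) (Fin.rev j)

theorem det_eq_mul_det_submatrix_castSucc (A : Matrix (Fin (n + 1)) (Fin (n + 1)) R)
    (h : ∀ j : Fin n, A (Fin.last n) j.castSucc = 0) :
    A.det = A (Fin.last n) (Fin.last n) * (A.submatrix Fin.castSucc Fin.castSucc).det := by
  rw [det_succ_row A (Fin.last n), Fin.sum_univ_castSucc]
  simp [h, Fin.succAbove_last, ← two_mul, pow_mul]

end Matrix

theorem Finset.Nat.sum_antidiagonalTuple_comp_perm {M : Type*} [AddCommMonoid M] {n p : ℕ}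
    (σ : Equiv.Perm (Fin n)) (F : (Fin n → ℕ) → M) :
    ∑ β ∈ antidiagonalTuple n p, F (β ∘ σ) = ∑ β ∈ antidiagonalTuple n p, F β := by
  refine Finset.sum_nbij' (· ∘ σ) (· ∘ σ.symm) (fun β hβ => ?_) (fun β hβ => ?_)
    (fun β _ => by ext; simp) (fun β _ => by ext; simp) (fun _ _ => rfl)
  · rw [mem_antidiagonalTuple] at hβ ⊢
    rw [← hβ]; exact Equiv.sum_comp σ β
  · rw [mem_antidiagonalTuple] at hβ ⊢
    rw [← hβ]; exact Equiv.sum_comp σ.symm β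

namespace PowerSeries

variable {R : Type*} [CommRing R] {n : ℕ}

theorem coeff_prod_univ_fin (f : Fin n → R⟦X⟧) (p : ℕ) :
    coeff p (∏ i, f i) = ∑ β ∈ Finset.Nat.antidiagonalTuple n p, ∏ i, coeff (β i) (f i) := by
  classical
  rw [coeff_prod]
  refine Finset.sum_nbij' (⇑) Finsupp.equivFunOnFinite.symm (fun l hl => ?_) (fun β hβ => ?_)
    (fun l _ => Finsupp.equivFunOnFinite.symm_apply_apply l) (fun _ _ => rfl) (fun _ _ => rfl)
  · rw [Finset.mem_finsuppAntidiag] at hl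
    rw [Finset.Nat.mem_antidiagonalTuple]
    exact hl.1
  · rw [Finset.Nat.mem_antidiagonalTuple] at hβ
    rw [Finset.mem_finsuppAntidiag]
    exact ⟨by simpa using hβ, Finset.subset_univ _⟩

theorem coeff_det_of_mk (f : Fin n → Fin n → ℕ → R) (p : ℕ) :
    coeff p (Matrix.of fun i j => mk (f i j)).det
      = ∑ β ∈ Finset.Nat.antidiagonalTuple n p, (Matrix.of fun i j => f i j (β i)).det := by
  calc coeff p (Matrix.of fun i j => mk (f i j)).det
      = ∑ σ : Equiv.Perm (Fin n), ∑ β ∈ Finset.Nat.antidiagonalTuple n p,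
          Equiv.Perm.sign σ • ∏ i, f (σ i) i (β (σ i)) := by
        simp only [Matrix.det_apply, Matrix.of_apply, map_sum, Units.smul_def, map_zsmul,
          coeff_prod_univ_fin, coeff_mk, Finset.smul_sum]
        exact Finset.sum_congr rfl fun σ _ =>
          (Finset.Nat.sum_antidiagonalTuple_comp_perm σ _).symm
    _ = _ := by
        rw [Finset.sum_comm]
        simp only [Matrix.det_apply, Matrix.of_apply]

theorem mk_eq_C_add_X_mul_mk_succ (g : ℕ → R) : mk g = C (g 0) + X * mk fun b => g (b + 1) := by
  rw [add_comm]; simpa using eq_X_mul_shift_add_const (mk g)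

theorem det_mk_shift_eq (f : Fin (n + 1) → ℕ → R) :
    (Matrix.of fun i j : Fin (n + 1) => mk fun b => f i (j + b)).det
      = (Matrix.of fun i j : Fin (n + 1) =>
          if (j : ℕ) < n then C (f i j) else mk fun b => f i (j + b)).det := by
  refine Matrix.det_eq_of_forall_col_eq_smul_add_succ (fun _ => X) (fun i => by simp)
    (fun i j => ?_)
  simp only [Matrix.of_apply, Fin.val_castSucc, j.isLt, if_true, Fin.val_succ]
  rw [mk_eq_C_add_X_mul_mk_succ]
  simp only [add_zero, add_assoc, add_comm 1]

end PowerSeries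

theorem hh_of_neg {k : ℤ} (hk : k < 0) : hh k = 0 := by
  rw [hh, if_neg (by omega), if_neg (by omega)]

theorem hh_zero : hh 0 = 1 := by
  simp [hh]

theorem schur_eq_schur_init {n : ℕ} (lam : Fin (n + 1) → ℤ) (hlast : lam (Fin.last n) = 0) :
    schur lam = schur (Fin.init lam) := by
  rw [schur, Matrix.det_eq_mul_det_submatrix_castSucc _ fun j => hh_of_neg (by simp [hlast])]
  simp only [Matrix.of_apply, hlast, Fin.val_last, zero_sub, neg_add_cancel, hh_zero, one_mul]
  rfl

section

open PowerSeries

noncomputable def hhSeriesMatrix {n : ℕ} (lam : Fin n → ℤ) : Matrix (Fin n) (Fin n) Lambda⟦X⟧ :=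
  Matrix.of fun i j => mk fun b => hh (lam i - i + (j + b : ℕ))

theorem coeff_det_hhSeriesMatrix {n : ℕ} (lam : Fin n → ℤ) (p : ℕ) :
    coeff p (hhSeriesMatrix lam).det
      = ∑ β ∈ Finset.Nat.antidiagonalTuple n p, schur fun i => lam i + (β i : ℤ) := by
  rw [hhSeriesMatrix, coeff_det_of_mk]
  refine Finset.sum_congr rfl fun β _ => congrArg Matrix.det (Matrix.ext fun i j => ?_)
  simp only [Matrix.of_apply]
  congr 1
  push_cast
  ring

theorem det_hhSeriesMatrix {n : ℕ} (lam : Fin (n + 1) → ℤ) (hlast : lam (Fin.last n) = 0) :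
    (hhSeriesMatrix lam).det = C (schur lam) * mk fun b => hh b := by
  rw [hhSeriesMatrix, det_mk_shift_eq (fun i k => hh (lam i - i + k)),
    Matrix.det_eq_mul_det_submatrix_castSucc _ fun j => by simp [hlast, hh_of_neg],
    schur_eq_schur_init lam hlast, mul_comm, schur, RingHom.map_det, RingHom.mapMatrix_apply]
  simp only [Matrix.of_apply, Fin.val_last, lt_irrefl, if_false, hlast]
  congr 2
  · exact Matrix.ext fun i j => by simp [Fin.init]
  · ext b
    simp

end

theorem alt_first_pieri_general (n : ℕ) (p : ℕ) (lam : Fin (n + 1) → ℤ)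
    (hlast : lam (Fin.last n) = 0) :
    schur lam * hh (p : ℤ)
      = ∑ β ∈ Finset.Nat.antidiagonalTuple (n + 1) p,
          schur (fun i => lam i + (β i : ℤ)) := by
  rw [← coeff_det_hhSeriesMatrix, det_hhSeriesMatrix lam hlast, PowerSeries.coeff_C_mul,
    PowerSeries.coeff_mk]

/-- The alternative first Pieri rule: if λ is a partition (of length n+1) with last entry
0, and p ∈ ℕ, then s_λ · h_p = Σ_{β ∈ ℕ^{n+1}, |β| = p} s_{λ+β}. -/
theorem alt_first_pieri (n : ℕ) (p : ℕ) (lam : Fin (n + 1) → ℤ)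
    (hanti : ∀ i j : Fin (n + 1), i ≤ j → lam j ≤ lam i)
    (hpos : ∀ i, 0 ≤ lam i)
    (hlast : lam (Fin.last n) = 0) :
    schur lam * hh (p : ℤ)
      = ∑ β ∈ Finset.Nat.antidiagonalTuple (n + 1) p,
          schur (fun i => lam i + (β i : ℤ)) :=
  alt_first_pieri_general n p lam hlast
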